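/- Let G be a graph. If IC(G) = 4, then G is isomorphic to K_4, or to the join K_2 + \bar{K}_m for some m ≥ 2, or to the join K_1 + B where B belongs to the family B_2, or G belongs to the family B_1, or G belongs to the family B_3. -/

import Mathlib

/-!
Fix an ic-partition `π` with four classes. Every class is either `{u}` for a universal vertex
`u`, or is independent and forms an independent coalition with another class of the second
kind. Four universal singletons give `K₄`, three are impossible, and two leave two classes whose
union is an independent dominating set, giving `K₂ + K̄ₘ`.

Otherwise the coalition graph on the remaining classes, having no isolated vertex, contains
either a star or a perfect matching. A star centre `T` forms an independent dominating set with
every other class, so its vertices are adjacent to the universal vertices only, and the other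
classes form an idomatic partition of the rest. Conversely every idomatic partition of `G - T`
extends by `T` to an ic-partition, so maximality of `π` pins down the idomatic number: this gives
`B₃`, or `K₁ + B₂` after deleting the universal vertex (which adds one class to any ic-partition).
A perfect matching splits `V` into two independent dominating sets; as there is no universal
vertex, every class of an idomatic partition splits into two classes of an ic-partition, so
`id(G) = 2` and `G ∈ B₁`.
-/

namespace ICNL

variable {V : Type*}

/-- `S` is a dominating set of `G`. -/
def Dominating (G : SimpleGraph V) (S : Set V) : Prop :=
  ∀ v : V, v ∈ S ∨ ∃ u ∈ S, G.Adj u v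

/-- `S` is an independent set of `G`. -/
def IndepSet (G : SimpleGraph V) (S : Set V) : Prop :=
  ∀ ⦃u : V⦄, u ∈ S → ∀ ⦃v : V⦄, v ∈ S → ¬ G.Adj u v

/-- `S` is an independent dominating set of `G`. -/
def IndepDom (G : SimpleGraph V) (S : Set V) : Prop :=
  IndepSet G S ∧ Dominating G S

/-- `A` and `B` form an independent coalition in `G`. -/
def ICCoalition (G : SimpleGraph V) (A B : Set V) : Prop :=
  Disjoint A B ∧ IndepSet G A ∧ IndepSet G B ∧
    ¬ IndepDom G A ∧ ¬ IndepDom G B ∧ IndepDom G (A ∪ B)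

/-- `π` is a partition of the vertex set into nonempty classes. -/
def IsPartition (π : Finset (Finset V)) : Prop :=
  (∀ A ∈ π, A.Nonempty) ∧ ∀ v : V, ∃! A : Finset V, A ∈ π ∧ v ∈ A

/-- `π` is an independent coalition partition of `G`. -/
def IsICPartition (G : SimpleGraph V) (π : Finset (Finset V)) : Prop :=
  IsPartition π ∧
    ∀ A ∈ π, (∃ v : V, (A : Set V) = {v} ∧ Dominating G (A : Set V)) ∨
      (¬ IndepDom G (A : Set V) ∧
        ∃ B ∈ π, B ≠ A ∧ ICCoalition G (A : Set V) (B : Set V))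

/-- The independent coalition number: the maximum number of classes of an
ic-partition of `G`. -/
noncomputable def IC (G : SimpleGraph V) : ℕ :=
  sSup {k | ∃ π : Finset (Finset V), IsICPartition G π ∧ π.card = k}


/-- `π` is an idomatic partition of `G`: a partition of the vertex set into
independent dominating sets. -/
def IsIdomaticPartition (G : SimpleGraph V) (π : Finset (Finset V)) : Prop :=
  IsPartition π ∧ ∀ A ∈ π, IndepDom G (A : Set V)

/-- The idomatic number: the maximum number of classes of an idomatic partition of `G`. -/
noncomputable def idNum (G : SimpleGraph V) : ℕ :=
  sSup {k | ∃ π : Finset (Finset V), IsIdomaticPartition G π ∧ π.card = k}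

/-- The join `G + H` of two disjoint graphs: their disjoint union together with all
edges between vertices of `G` and vertices of `H`. -/
def graphJoin {α β : Type*} (G : SimpleGraph α) (H : SimpleGraph β) :
    SimpleGraph (α ⊕ β) :=
  ((Gᶜ) ⊕g (Hᶜ))ᶜ

/-- `G` belongs to the family `B₁`: `G` is a bipartite graph with partite sets `H₁`
and `H₂` of cardinality at least `2` each, with minimum degree at least `1` and
idomatic number `2`. -/
def InB1 {U : Type*} (G : SimpleGraph U) : Prop :=
  ∃ H1 H2 : Set U, H1 ∪ H2 = Set.univ ∧ Disjoint H1 H2 ∧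
    IndepSet G H1 ∧ IndepSet G H2 ∧ 2 ≤ H1.ncard ∧ 2 ≤ H2.ncard ∧
    (∀ v : U, ∃ w : U, G.Adj v w) ∧ idNum G = 2

/-- `G` belongs to the family `B₂`: `G` is the disjoint union of a bipartite graph `H`
with minimum degree at least `1` and idomatic number `2`, together with a nonempty
edgeless graph. -/
def InB2 {U : Type*} (G : SimpleGraph U) : Prop :=
  ∃ (W : Type) (H : SimpleGraph W) (m : ℕ),
    1 ≤ m ∧ H.Colorable 2 ∧ (∀ v : W, ∃ w : W, H.Adj v w) ∧ idNum H = 2 ∧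
    Nonempty (G ≃g (H ⊕g (⊥ : SimpleGraph (Fin m))))

/-- `G` belongs to the family `B₃`: `G` is the disjoint union of a `3`-partite graph `H`
with minimum degree at least `1` and idomatic number `3`, together with a nonempty
edgeless graph. -/
def InB3 {U : Type*} (G : SimpleGraph U) : Prop :=
  ∃ (W : Type) (H : SimpleGraph W) (m : ℕ),
    1 ≤ m ∧ H.Colorable 3 ∧ (∀ v : W, ∃ w : W, H.Adj v w) ∧ idNum H = 3 ∧
    Nonempty (G ≃g (H ⊕g (⊥ : SimpleGraph (Fin m))))

section IndependentDomination

variable {G : SimpleGraph V}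

lemma IndepSet.mono {S T : Set V} (hT : IndepSet G T) (hST : S ⊆ T) : IndepSet G S :=
  fun _ hu _ hv => hT (hST hu) (hST hv)

lemma indepSet_singleton (v : V) : IndepSet G {v} :=
  fun _ ha _ hb hab => G.ne_of_adj hab (ha.trans hb.symm)

lemma dominating_singleton_iff {v : V} : Dominating G {v} ↔ ∀ w, w ≠ v → G.Adj v w := by
  refine forall_congr' fun w => ?_
  simp only [Set.mem_singleton_iff, exists_eq_left]
  exact or_iff_not_imp_left

lemma IndepSet.not_dominating_of_subset {S T : Set V} (hT : IndepSet G T) (hST : S ⊆ T)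
    {w : V} (hwT : w ∈ T) (hwS : w ∉ S) : ¬ Dominating G S := by
  intro hS
  obtain hw | ⟨u, hu, huw⟩ := hS w
  · exact hwS hw
  · exact hT (hST hu) hwT huw

lemma ICCoalition.symm {A B : Set V} (h : ICCoalition G A B) : ICCoalition G B A := by
  obtain ⟨hdisj, hA, hB, hnA, hnB, hAB⟩ := h
  exact ⟨hdisj.symm, hB, hA, hnB, hnA, Set.union_comm A B ▸ hAB⟩

lemma icCoalition_of_indepDom_union {A B : Set V} (h : IndepDom G (A ∪ B)) (hdisj : Disjoint A B)
    (hA : A.Nonempty) (hB : B.Nonempty) : ICCoalition G A B := by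
  obtain ⟨a, ha⟩ := hA
  obtain ⟨b, hb⟩ := hB
  refine ⟨hdisj, h.1.mono Set.subset_union_left, h.1.mono Set.subset_union_right,
    fun hAd => ?_, fun hBd => ?_, h⟩
  · exact h.1.not_dominating_of_subset Set.subset_union_left (Or.inr hb)
      (Set.disjoint_right.mp hdisj hb) hAd.2
  · exact h.1.not_dominating_of_subset Set.subset_union_right (Or.inl ha)
      (Set.disjoint_left.mp hdisj ha) hBd.2

lemma two_le_ncard_of_dominating [Finite V] (hnu : ∀ v : V, ¬ Dominating G {v}) {S : Set V}
    (hS : Dominating G S) (hne : S.Nonempty) : 2 ≤ S.ncard := by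
  by_contra! hlt
  have hpos := (Set.ncard_pos (Set.toFinite S)).mpr hne
  obtain ⟨v, rfl⟩ := Set.ncard_eq_one.mp (by omega : S.ncard = 1)
  exact hnu v hS

end IndependentDomination

section Partitions

variable {π : Finset (Finset V)}

lemma isPartition_iff : IsPartition π ↔ (∀ A ∈ π, A.Nonempty) ∧
    (∀ A ∈ π, ∀ B ∈ π, ∀ v ∈ A, v ∈ B → A = B) ∧ ∀ v, ∃ A ∈ π, v ∈ A := by
  refine and_congr_right fun _ => ⟨fun h => ⟨fun A hA B hB v hvA hvB => ?_, fun v => ?_⟩,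
    fun ⟨huniq, hcov⟩ v => ?_⟩
  · obtain ⟨C, -, hC⟩ := h v
    exact (hC A ⟨hA, hvA⟩).trans (hC B ⟨hB, hvB⟩).symm
  · obtain ⟨C, hC, -⟩ := h v
    exact ⟨C, hC⟩
  · obtain ⟨A, hA, hvA⟩ := hcov v
    exact ⟨A, ⟨hA, hvA⟩, fun B ⟨hB, hvB⟩ => huniq B hB A hA v hvB hvA⟩

lemma IsPartition.exists_mem (hπ : IsPartition π) (v : V) : ∃ A ∈ π, v ∈ A :=
  (isPartition_iff.mp hπ).2.2 v

lemma IsPartition.eq_of_mem (hπ : IsPartition π) {A B : Finset V} (hA : A ∈ π) (hB : B ∈ π)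
    {v : V} (hvA : v ∈ A) (hvB : v ∈ B) : A = B :=
  (isPartition_iff.mp hπ).2.1 A hA B hB v hvA hvB

lemma IsPartition.disjoint (hπ : IsPartition π) {A B : Finset V} (hA : A ∈ π) (hB : B ∈ π)
    (hAB : A ≠ B) : Disjoint (A : Set V) B :=
  Set.disjoint_left.mpr fun _ hvA hvB => hAB (hπ.eq_of_mem hA hB hvA hvB)

end Partitions

section Extremal

variable {G : SimpleGraph V}

lemma IC_le {k : ℕ} (h : ∀ π, IsICPartition G π → π.card ≤ k) : IC G ≤ k :=
  csSup_le' (by rintro _ ⟨π, hπ, rfl⟩; exact h π hπ)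

lemma idNum_le {k : ℕ} (h : ∀ π, IsIdomaticPartition G π → π.card ≤ k) : idNum G ≤ k :=
  csSup_le' (by rintro _ ⟨π, hπ, rfl⟩; exact h π hπ)

variable [Finite V]

lemma bddAbove_card_of_finite (p : Finset (Finset V) → Prop) :
    BddAbove {k | ∃ π, p π ∧ Finset.card π = k} := by
  have := Fintype.ofFinite V
  exact ⟨Fintype.card (Finset V), by rintro _ ⟨π, -, rfl⟩; exact Finset.card_le_univ π⟩

lemma card_le_IC {π : Finset (Finset V)} (hπ : IsICPartition G π) : π.card ≤ IC G :=
  le_csSup (bddAbove_card_of_finite _) ⟨π, hπ, rfl⟩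

lemma card_le_idNum {π : Finset (Finset V)} (hπ : IsIdomaticPartition G π) : π.card ≤ idNum G :=
  le_csSup (bddAbove_card_of_finite _) ⟨π, hπ, rfl⟩

lemma idNum_eq {k : ℕ} {π : Finset (Finset V)} (hπ : IsIdomaticPartition G π) (hk : π.card = k)
    (h : ∀ ρ, IsIdomaticPartition G ρ → ρ.card ≤ k) : idNum G = k :=
  (idNum_le h).antisymm (hk ▸ card_le_idNum hπ)

lemma exists_isICPartition_card_eq_IC (h : IC G ≠ 0) :
    ∃ π, IsICPartition G π ∧ π.card = IC G := by
  have hne : {k | ∃ π, IsICPartition G π ∧ Finset.card π = k}.Nonempty := by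
    by_contra hemp
    exact h (by simp [IC, Set.not_nonempty_iff_eq_empty.mp hemp])
  exact Nat.sSup_mem hne (bddAbove_card_of_finite _)

end Extremal

section ICPartitions

variable {G : SimpleGraph V} {π : Finset (Finset V)}

def IsDomSingleton (G : SimpleGraph V) (A : Finset V) : Prop :=
  ∃ v : V, (A : Set V) = {v} ∧ Dominating G (A : Set V)

lemma IsDomSingleton.indepDom {A : Finset V} (h : IsDomSingleton G A) : IndepDom G A := by
  obtain ⟨v, hv, hdom⟩ := h
  exact ⟨hv ▸ indepSet_singleton v, hdom⟩

open Classical in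
noncomputable def coalitionClasses (G : SimpleGraph V) (π : Finset (Finset V)) :
    Finset (Finset V) :=
  π.filter fun A => ¬ IsDomSingleton G A

lemma mem_coalitionClasses {A : Finset V} :
    A ∈ coalitionClasses G π ↔ A ∈ π ∧ ¬ IsDomSingleton G A := by
  simp [coalitionClasses]

lemma IsICPartition.exists_coalition (hπ : IsICPartition G π) {A : Finset V}
    (hA : A ∈ coalitionClasses G π) :
    ∃ B ∈ coalitionClasses G π, B ≠ A ∧ ICCoalition G A B := by
  obtain ⟨hAπ, hnA⟩ := mem_coalitionClasses.mp hA
  obtain h | ⟨-, B, hB, hBA, hAB⟩ := hπ.2 A hAπ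
  · exact absurd h hnA
  · exact ⟨B, mem_coalitionClasses.mpr ⟨hB, fun hdB => hAB.2.2.2.2.1 hdB.indepDom⟩, hBA, hAB⟩

lemma IsICPartition.indepSet (hπ : IsICPartition G π) {A : Finset V} (hA : A ∈ π) :
    IndepSet G A := by
  by_cases hd : IsDomSingleton G A
  · exact hd.indepDom.1
  · obtain ⟨B, -, -, hAB⟩ := hπ.exists_coalition (mem_coalitionClasses.mpr ⟨hA, hd⟩)
    exact hAB.2.1

lemma IsICPartition.isDomSingleton_iff (hπ : IsICPartition G π) {A : Finset V} (hA : A ∈ π)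
    {v : V} (hv : v ∈ A) : IsDomSingleton G A ↔ Dominating G {v} := by
  constructor
  · rintro ⟨w, hw, hdom⟩
    have hvw : v = w := by simpa [hw] using Finset.mem_coe.mpr hv
    rwa [hw, ← hvw] at hdom
  · intro hdom
    have hAv : (A : Set V) = {v} := by
      refine Set.eq_singleton_iff_unique_mem.mpr ⟨hv, fun w hw => ?_⟩
      by_contra hwv
      exact hπ.indepSet hA hv hw (dominating_singleton_iff.mp hdom w hwv)
    exact ⟨v, hAv, hAv ▸ hdom⟩

lemma IsICPartition.singleton_mem (hπ : IsICPartition G π) {v : V} (hv : Dominating G {v}) :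
    {v} ∈ π := by
  obtain ⟨A, hA, hvA⟩ := hπ.1.exists_mem v
  obtain ⟨w, hw, -⟩ := (hπ.isDomSingleton_iff hA hvA).mpr hv
  have hvw : v = w := by simpa [hw] using Finset.mem_coe.mpr hvA
  rwa [← Finset.coe_eq_singleton.mp (hvw ▸ hw)]

lemma IsICPartition.not_dominating_iff (hπ : IsICPartition G π) {v : V} :
    ¬ Dominating G {v} ↔ ∃ A ∈ coalitionClasses G π, v ∈ A := by
  constructor
  · intro hv
    obtain ⟨A, hA, hvA⟩ := hπ.1.exists_mem v
    exact ⟨A, mem_coalitionClasses.mpr ⟨hA, (hπ.isDomSingleton_iff hA hvA).not.mpr hv⟩, hvA⟩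
  · rintro ⟨A, hA, hvA⟩
    obtain ⟨hAπ, hnA⟩ := mem_coalitionClasses.mp hA
    exact (hπ.isDomSingleton_iff hAπ hvA).not.mp hnA

lemma IsICPartition.mem_coalitionClasses_iff_ne_singleton (hπ : IsICPartition G π) {u : V}
    (hu : ∀ v, Dominating G {v} ↔ v = u) {X : Finset V} (hX : X ∈ π) :
    X ∈ coalitionClasses G π ↔ X ≠ {u} := by
  obtain ⟨x, hx⟩ := (isPartition_iff.mp hπ.1).1 X hX
  rw [mem_coalitionClasses, hπ.isDomSingleton_iff hX hx, hu, and_iff_right hX]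
  constructor
  · rintro hxu rfl
    exact hxu (Finset.mem_singleton.mp hx)
  · rintro hXu rfl
    exact hXu (hπ.1.eq_of_mem hX (hπ.singleton_mem ((hu x).mpr rfl)) hx
      (Finset.mem_singleton_self x))

lemma IsICPartition.ncard_add_card_coalitionClasses [Finite V] (hπ : IsICPartition G π) :
    {v | Dominating G {v}}.ncard + (coalitionClasses G π).card = π.card := by
  classical
  have hdom : (fun v => ({v} : Finset V)) '' {v | Dominating G {v}} =
      ↑(π.filter (IsDomSingleton G)) := by
    ext A
    simp only [Set.mem_image, Set.mem_ofPred_eq, Finset.coe_filter]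
    constructor
    · rintro ⟨v, hv, rfl⟩
      exact ⟨hπ.singleton_mem hv, v, Finset.coe_singleton v, by rwa [Finset.coe_singleton]⟩
    · rintro ⟨hA, v, hAv, hAd⟩
      exact ⟨v, hAv ▸ hAd, (Finset.coe_eq_singleton.mp hAv).symm⟩
  have hcoal : coalitionClasses G π = π.filter fun A => ¬ IsDomSingleton G A := by
    ext A
    rw [mem_coalitionClasses, Finset.mem_filter]
  rw [← Set.ncard_image_of_injective _ Finset.singleton_injective, hdom, Set.ncard_coe_finset,
    hcoal, Finset.card_filter_add_card_filter_not]

lemma IsICPartition.card_coalitionClasses_ne_one (hπ : IsICPartition G π) :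
    (coalitionClasses G π).card ≠ 1 := by
  intro h
  obtain ⟨A, hA⟩ := Finset.card_eq_one.mp h
  obtain ⟨B, hB, hBA, -⟩ := hπ.exists_coalition (hA ▸ Finset.mem_singleton_self A)
  rw [hA, Finset.mem_singleton] at hB
  exact hBA hB

end ICPartitions

section Induced

variable {G : SimpleGraph V} {S : Set V}

lemma indepSet_induce_iff {Z : Set S} :
    IndepSet (G.induce S) Z ↔ IndepSet G (Subtype.val '' Z) := by
  constructor
  · rintro h _ ⟨a, ha, rfl⟩ _ ⟨b, hb, rfl⟩
    exact h ha hb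
  · exact fun h a ha b hb => h ⟨a, ha, rfl⟩ ⟨b, hb, rfl⟩

lemma dominating_induce_iff {Z : Set S} : Dominating (G.induce S) Z ↔
    ∀ v ∈ S, v ∈ Subtype.val '' Z ∨ ∃ u ∈ Subtype.val '' Z, G.Adj u v := by
  constructor
  · intro h v hv
    obtain hz | ⟨u, hu, huv⟩ := h ⟨v, hv⟩
    · exact Or.inl ⟨_, hz, rfl⟩
    · exact Or.inr ⟨u, ⟨u, hu, rfl⟩, huv⟩
  · intro h v
    obtain ⟨w, hw, hwv⟩ | ⟨_, ⟨u, hu, rfl⟩, huv⟩ := h v v.2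
    · exact Or.inl (Subtype.val_injective hwv ▸ hw)
    · exact Or.inr ⟨u, hu, huv⟩

lemma IndepDom.induce {Z : Set V} (h : IndepDom G Z) (hZ : Z ⊆ S) :
    IndepDom (G.induce S) (Subtype.val ⁻¹' Z) := by
  rw [IndepDom, indepSet_induce_iff, dominating_induce_iff, Subtype.image_preimage_coe,
    Set.inter_eq_right.mpr hZ]
  exact ⟨h.1, fun v _ => h.2 v⟩

noncomputable def traceOn (S : Set V) (A : Finset V) : Finset S :=
  A.preimage Subtype.val Subtype.val_injective.injOn

@[simp]
lemma coe_traceOn (A : Finset V) : (traceOn S A : Set S) = Subtype.val ⁻¹' A :=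
  Finset.coe_preimage _ _

@[simp]
lemma mem_traceOn {A : Finset V} {x : S} : x ∈ traceOn S A ↔ x.1 ∈ A :=
  Finset.mem_preimage

lemma image_val_traceOn {A : Finset V} (hA : (A : Set V) ⊆ S) :
    Subtype.val '' (traceOn S A : Set S) = A := by
  rw [coe_traceOn, Subtype.image_preimage_coe, Set.inter_eq_right.mpr hA]

@[simp]
lemma coe_map_subtype (A : Finset S) :
    (A.map (Function.Embedding.subtype _) : Set V) = Subtype.val '' (A : Set S) := by
  rw [Finset.coe_map, Function.Embedding.coe_subtype]

lemma mem_map_subtype {A : Finset S} {v : V} :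
    v ∈ A.map (Function.Embedding.subtype _) ↔ ∃ h : v ∈ S, ⟨v, h⟩ ∈ A := by
  rw [Finset.mem_map]
  constructor
  · rintro ⟨x, hx, rfl⟩
    exact ⟨x.2, hx⟩
  · rintro ⟨h, hv⟩
    exact ⟨_, hv, rfl⟩

end Induced

section PartitionsOfSubsets

variable {π : Finset (Finset V)} {X : Finset V}

open Classical in
noncomputable def restrictCompl (π : Finset (Finset V)) (X : Finset V) :
    Finset (Finset ((X : Set V)ᶜ : Set V)) :=
  (π.erase X).image (traceOn _)

lemma mem_restrictCompl {Y' : Finset ((X : Set V)ᶜ : Set V)} :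
    Y' ∈ restrictCompl π X ↔ ∃ Y ∈ π, Y ≠ X ∧ traceOn _ Y = Y' := by
  classical
  simp only [restrictCompl, Finset.mem_image, Finset.mem_erase]
  constructor
  · rintro ⟨Y, ⟨hYX, hY⟩, rfl⟩
    exact ⟨Y, hY, hYX, rfl⟩
  · rintro ⟨Y, hY, hYX, rfl⟩
    exact ⟨Y, ⟨hYX, hY⟩, rfl⟩

lemma IsPartition.subset_compl (hπ : IsPartition π) (hX : X ∈ π) {Y : Finset V} (hY : Y ∈ π)
    (hYX : Y ≠ X) : (Y : Set V) ⊆ (X : Set V)ᶜ :=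
  (hπ.disjoint hY hX hYX).subset_compl_right

lemma isPartition_restrictCompl (hπ : IsPartition π) (hX : X ∈ π) :
    IsPartition (restrictCompl π X) := by
  refine isPartition_iff.mpr ⟨?_, ?_, fun v => ?_⟩
  · intro Y' hY'
    obtain ⟨Y, hY, hYX, rfl⟩ := mem_restrictCompl.mp hY'
    obtain ⟨y, hy⟩ := (isPartition_iff.mp hπ).1 Y hY
    exact ⟨⟨y, hπ.subset_compl hX hY hYX hy⟩, mem_traceOn.mpr hy⟩
  · intro A' hA' B' hB' v hvA hvB
    obtain ⟨A, hA, -, rfl⟩ := mem_restrictCompl.mp hA'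
    obtain ⟨B, hB, -, rfl⟩ := mem_restrictCompl.mp hB'
    rw [hπ.eq_of_mem hA hB (mem_traceOn.mp hvA) (mem_traceOn.mp hvB)]
  · obtain ⟨Y, hY, hvY⟩ := hπ.exists_mem v.1
    have hYX : Y ≠ X := by
      rintro rfl
      exact v.2 hvY
    exact ⟨traceOn _ Y, mem_restrictCompl.mpr ⟨Y, hY, hYX, rfl⟩, mem_traceOn.mpr hvY⟩

lemma IsPartition.card_restrictCompl (hπ : IsPartition π) (hX : X ∈ π) :
    (restrictCompl π X).card = π.card - 1 := by
  classical
  rw [restrictCompl, Finset.card_image_of_injOn, Finset.card_erase_of_mem hX]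
  intro A hA B hB hAB
  obtain ⟨hAX, hAπ⟩ := Finset.mem_erase.mp hA
  obtain ⟨hBX, hBπ⟩ := Finset.mem_erase.mp hB
  obtain ⟨a, ha⟩ := (isPartition_iff.mp hπ).1 A hAπ
  have haB : a ∈ B := mem_traceOn.mp
    (hAB ▸ mem_traceOn.mpr ha : (⟨a, hπ.subset_compl hX hAπ hAX ha⟩ : ((X : Set V)ᶜ : Set V)) ∈ _)
  exact hπ.eq_of_mem hAπ hBπ ha haB

variable [DecidableEq V] {T : Finset V} {ρ : Finset (Finset ((T : Set V)ᶜ : Set V))}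

lemma isPartition_insert_image_map (hT : T.Nonempty) (hρ : IsPartition ρ) :
    IsPartition (insert T (ρ.image (Finset.map (Function.Embedding.subtype _)))) := by
  refine isPartition_iff.mpr ⟨?_, ?_, fun v => ?_⟩
  · simp only [Finset.mem_insert, Finset.mem_image]
    rintro _ (rfl | ⟨A, hA, rfl⟩)
    exacts [hT, ((isPartition_iff.mp hρ).1 A hA).map]
  · simp only [Finset.mem_insert, Finset.mem_image]
    rintro _ (rfl | ⟨A, hA, rfl⟩) _ (rfl | ⟨B, hB, rfl⟩) v hvA hvB
    · rfl
    · exact absurd hvA (mem_map_subtype.mp hvB).1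
    · exact absurd hvB (mem_map_subtype.mp hvA).1
    · obtain ⟨_, hA'⟩ := mem_map_subtype.mp hvA
      obtain ⟨_, hB'⟩ := mem_map_subtype.mp hvB
      rw [hρ.eq_of_mem hA hB hA' hB']
  · by_cases hvT : v ∈ T
    · exact ⟨T, Finset.mem_insert_self _ _, hvT⟩
    · obtain ⟨A, hA, hvA⟩ := hρ.exists_mem ⟨v, hvT⟩
      exact ⟨_, Finset.mem_insert_of_mem (Finset.mem_image_of_mem _ hA),
        mem_map_subtype.mpr ⟨hvT, hvA⟩⟩

lemma card_insert_image_map (hT : T.Nonempty) :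
    (insert T (ρ.image (Finset.map (Function.Embedding.subtype _)))).card = ρ.card + 1 := by
  rw [Finset.card_insert_of_notMem, Finset.card_image_of_injective _ (Finset.map_injective _)]
  simp only [Finset.mem_image, not_exists, not_and]
  intro A _ hAT
  obtain ⟨t, ht⟩ := hT
  exact absurd ht (mem_map_subtype.mp (hAT ▸ ht)).1

end PartitionsOfSubsets

section SplittingOff

variable [DecidableEq V] {ρ : Finset (Finset V)} {a : Finset V → V}

def splitOff (ρ : Finset (Finset V)) (a : Finset V → V) : Finset (Finset V) :=
  ρ.biUnion fun D => {{a D}, D.erase (a D)}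

lemma mem_splitOff {P : Finset V} :
    P ∈ splitOff ρ a ↔ ∃ D ∈ ρ, P = {a D} ∨ P = D.erase (a D) := by
  simp [splitOff]

lemma nonempty_subset_of_mem_split (ha : ∀ D ∈ ρ, a D ∈ D)
    (hrest : ∀ D ∈ ρ, (D.erase (a D)).Nonempty) {D P : Finset V} (hD : D ∈ ρ)
    (hP : P = {a D} ∨ P = D.erase (a D)) : P.Nonempty ∧ P ⊆ D := by
  rcases hP with rfl | rfl
  exacts [⟨Finset.singleton_nonempty _, Finset.singleton_subset_iff.mpr (ha D hD)⟩,
    ⟨hrest D hD, Finset.erase_subset _ _⟩]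

lemma isPartition_splitOff (hρ : IsPartition ρ) (ha : ∀ D ∈ ρ, a D ∈ D)
    (hrest : ∀ D ∈ ρ, (D.erase (a D)).Nonempty) : IsPartition (splitOff ρ a) := by
  refine isPartition_iff.mpr ⟨fun P hP => ?_, fun P hP P' hP' v hvP hvP' => ?_, fun v => ?_⟩
  · obtain ⟨D, hD, hPD⟩ := mem_splitOff.mp hP
    exact (nonempty_subset_of_mem_split ha hrest hD hPD).1
  · obtain ⟨D, hD, hPD⟩ := mem_splitOff.mp hP
    obtain ⟨D', hD', hPD'⟩ := mem_splitOff.mp hP'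
    obtain rfl := hρ.eq_of_mem hD hD' ((nonempty_subset_of_mem_split ha hrest hD hPD).2 hvP)
      ((nonempty_subset_of_mem_split ha hrest hD' hPD').2 hvP')
    rcases hPD with rfl | rfl <;> rcases hPD' with rfl | rfl <;> simp_all
  · obtain ⟨D, hD, hvD⟩ := hρ.exists_mem v
    by_cases hv : v = a D
    · exact ⟨_, mem_splitOff.mpr ⟨D, hD, Or.inl rfl⟩, Finset.mem_singleton.mpr hv⟩
    · exact ⟨_, mem_splitOff.mpr ⟨D, hD, Or.inr rfl⟩, Finset.mem_erase.mpr ⟨hv, hvD⟩⟩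

lemma card_splitOff (hρ : IsPartition ρ) (ha : ∀ D ∈ ρ, a D ∈ D)
    (hrest : ∀ D ∈ ρ, (D.erase (a D)).Nonempty) : (splitOff ρ a).card = 2 * ρ.card := by
  rw [splitOff, Finset.card_biUnion, Finset.sum_const_nat, mul_comm]
  · intro D _
    refine Finset.card_pair fun h => ?_
    exact Finset.notMem_erase (a D) D (h ▸ Finset.mem_singleton_self (a D))
  · intro D hD D' hD' hDD'
    refine Finset.disjoint_left.mpr fun P hP hP' => hDD' ?_
    simp only [Finset.mem_insert, Finset.mem_singleton] at hP hP'
    obtain ⟨⟨x, hx⟩, hPD⟩ := nonempty_subset_of_mem_split ha hrest hD hP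
    exact hρ.eq_of_mem hD hD' (hPD hx) ((nonempty_subset_of_mem_split ha hrest hD' hP').2 hx)

end SplittingOff

section LowerBounds

variable {G : SimpleGraph V}

lemma isICPartition_of_forall {π : Finset (Finset V)} (hπ : IsPartition π)
    (h : ∀ A ∈ π, IsDomSingleton G A ∨ ∃ B ∈ π, B ≠ A ∧ ICCoalition G A B) :
    IsICPartition G π :=
  ⟨hπ, fun A hA => (h A hA).imp id fun ⟨B, hB, hBA, hAB⟩ => ⟨hAB.2.2.2.1, B, hB, hBA, hAB⟩⟩

lemma ICCoalition.ne {A B : Finset V} (h : ICCoalition G A B) (hB : B.Nonempty) : A ≠ B := by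
  rintro rfl
  obtain ⟨b, hb⟩ := hB
  exact Set.disjoint_left.mp h.1 hb hb

lemma icCoalition_singleton_erase [DecidableEq V] {D : Finset V} (hD : IndepDom G D) {a : V}
    (ha : a ∈ D) (hne : (D.erase a).Nonempty) : ICCoalition G ({a} : Finset V) (D.erase a) := by
  refine icCoalition_of_indepDom_union ?_ ?_ (by simp) (by exact_mod_cast hne)
  · rwa [← Finset.coe_union, ← Finset.insert_eq, Finset.insert_erase ha]
  · simp

lemma two_mul_card_le_IC [Finite V] (hnu : ∀ v : V, ¬ Dominating G {v})
    {ρ : Finset (Finset V)} (hρ : IsIdomaticPartition G ρ) : 2 * ρ.card ≤ IC G := by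
  classical
  obtain rfl | ⟨D₀, hD₀⟩ := ρ.eq_empty_or_nonempty
  · simp
  have : Nonempty V := ⟨((isPartition_iff.mp hρ.1).1 D₀ hD₀).choose⟩
  choose! a ha using fun D (hD : D ∈ ρ) => (isPartition_iff.mp hρ.1).1 D hD
  have hrest : ∀ D ∈ ρ, (D.erase (a D)).Nonempty := by
    intro D hD
    by_contra hemp
    rw [Finset.not_nonempty_iff_eq_empty, Finset.erase_eq_empty_iff] at hemp
    obtain hD0 | hD1 := hemp
    · exact Finset.notMem_empty _ (hD0 ▸ ha D hD)
    · have hdom := (hρ.2 D hD).2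
      rw [hD1, Finset.coe_singleton] at hdom
      exact hnu (a D) hdom
  have hcoal D (hD : D ∈ ρ) := icCoalition_singleton_erase (hρ.2 D hD) (ha D hD) (hrest D hD)
  rw [← card_splitOff hρ.1 ha hrest]
  refine card_le_IC (isICPartition_of_forall (isPartition_splitOff hρ.1 ha hrest) fun P hP => ?_)
  obtain ⟨D, hD, rfl | rfl⟩ := mem_splitOff.mp hP
  · exact Or.inr ⟨_, mem_splitOff.mpr ⟨D, hD, Or.inr rfl⟩, (hcoal D hD).ne (hrest D hD) |>.symm,
      hcoal D hD⟩
  · exact Or.inr ⟨_, mem_splitOff.mpr ⟨D, hD, Or.inl rfl⟩, (hcoal D hD).ne (hrest D hD),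
      (hcoal D hD).symm⟩

end LowerBounds

section Extensions

variable {G : SimpleGraph V}

lemma indepDom_image_val_iff_of_universal {u : V} (hu : Dominating G {u})
    {Z : Set (((({u} : Finset V) : Set V)ᶜ : Set V))} (hZ : Z.Nonempty) :
    IndepDom G (Subtype.val '' Z) ↔ IndepDom (G.induce (({u} : Finset V) : Set V)ᶜ) Z := by
  rw [IndepDom, IndepDom, indepSet_induce_iff, dominating_induce_iff]
  refine and_congr_right fun _ => ⟨fun h v _ => h v, fun h v => ?_⟩
  by_cases hvu : v = u
  · obtain ⟨z, hz⟩ := hZ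
    have hzu : z.1 ≠ u := by simpa using z.2
    exact Or.inr ⟨z, ⟨z, hz, rfl⟩, hvu ▸ (dominating_singleton_iff.mp hu z hzu).symm⟩
  · exact h v (by simpa using hvu)

variable [Finite V] [DecidableEq V]

/-- Each class of an idomatic partition of `G - T` forms an independent coalition with the
set `T` of isolated vertices. -/
lemma card_add_one_le_IC_of_isolated {T : Finset V} (hT : T.Nonempty)
    (hiso : ∀ t ∈ T, ∀ v, ¬ G.Adj t v) {ρ : Finset (Finset ((T : Set V)ᶜ : Set V))}
    (hρ : IsIdomaticPartition (G.induce (T : Set V)ᶜ) ρ) (hρne : ρ.Nonempty) :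
    ρ.card + 1 ≤ IC G := by
  have hcoal : ∀ A ∈ ρ, ICCoalition G ↑(A.map (Function.Embedding.subtype _)) ↑T := by
    intro A hA
    obtain ⟨hAind, hAdom⟩ := hρ.2 A hA
    rw [indepSet_induce_iff] at hAind
    rw [dominating_induce_iff] at hAdom
    have hunion : IndepDom G (Subtype.val '' (A : Set ((T : Set V)ᶜ : Set V)) ∪ T) := by
      refine ⟨?_, fun v => ?_⟩
      · rintro x (hx | hx) y (hy | hy) hxy
        exacts [hAind hx hy hxy, hiso y hy x hxy.symm, hiso x hx y hxy, hiso x hx y hxy]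
      · by_cases hv : v ∈ T
        · exact Or.inl (Or.inr hv)
        · obtain h | ⟨u, hu, huv⟩ := hAdom v hv
          exacts [Or.inl (Or.inl h), Or.inr ⟨u, Or.inl hu, huv⟩]
    obtain ⟨x, hx⟩ := (isPartition_iff.mp hρ.1).1 A hA
    rw [coe_map_subtype]
    refine icCoalition_of_indepDom_union hunion ?_ ⟨x, x, hx, rfl⟩ hT
    rw [Set.disjoint_left]
    rintro _ ⟨y, -, rfl⟩
    exact y.2
  rw [← card_insert_image_map hT]
  refine card_le_IC (isICPartition_of_forall (isPartition_insert_image_map hT hρ.1) ?_)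
  intro X hX
  rw [Finset.mem_insert, Finset.mem_image] at hX
  rcases hX with rfl | ⟨A, hA, rfl⟩
  · obtain ⟨A, hA⟩ := hρne
    exact Or.inr ⟨_, Finset.mem_insert_of_mem (Finset.mem_image_of_mem _ hA),
      (hcoal A hA).ne hT, (hcoal A hA).symm⟩
  · exact Or.inr ⟨T, Finset.mem_insert_self _ _, ((hcoal A hA).ne hT).symm, hcoal A hA⟩

/-- Adding the class `{u}` of a universal vertex `u` to an ic-partition of `G - u` gives an
ic-partition of `G`. -/
lemma card_add_one_le_IC_of_universal {u : V} (hu : Dominating G {u})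
    {π : Finset (Finset (((({u} : Finset V) : Set V)ᶜ : Set V)))}
    (hπ : IsICPartition (G.induce (({u} : Finset V) : Set V)ᶜ) π) : π.card + 1 ≤ IC G := by
  have hne : ∀ A ∈ π, (A : Set ((({u} : Finset V) : Set V)ᶜ : Set V)).Nonempty := fun A hA =>
    Finset.coe_nonempty.mpr ((isPartition_iff.mp hπ.1).1 A hA)
  have hT : ({u} : Finset V).Nonempty := Finset.singleton_nonempty u
  rw [← card_insert_image_map hT]
  refine card_le_IC (isICPartition_of_forall (isPartition_insert_image_map hT hπ.1) ?_)
  intro X hX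
  rw [Finset.mem_insert, Finset.mem_image] at hX
  rcases hX with rfl | ⟨A, hA, rfl⟩
  · exact Or.inl ⟨u, Finset.coe_singleton u, by rwa [Finset.coe_singleton]⟩
  obtain ⟨w, hw, hdom⟩ | ⟨-, B, hB, hBA, hAB⟩ := hπ.2 A hA
  · left
    have hAw : ((A.map (Function.Embedding.subtype _) : Finset V) : Set V) = {w.1} := by
      rw [coe_map_subtype, hw, Set.image_singleton]
    refine ⟨w, hAw, ?_⟩
    rw [coe_map_subtype]
    exact ((indepDom_image_val_iff_of_universal hu (hne A hA)).mpr
      (IsDomSingleton.indepDom ⟨w, hw, hdom⟩)).2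
  · right
    refine ⟨B.map _, Finset.mem_insert_of_mem (Finset.mem_image_of_mem _ hB),
      fun h => hBA (Finset.map_injective _ h), ?_⟩
    obtain ⟨hdisj, hAind, hBind, hnA, hnB, hABdom⟩ := hAB
    simp only [coe_map_subtype]
    refine ⟨(Set.disjoint_image_iff Subtype.val_injective).mpr hdisj,
      indepSet_induce_iff.mp hAind, indepSet_induce_iff.mp hBind,
      fun h => hnA ((indepDom_image_val_iff_of_universal hu (hne A hA)).mp h),
      fun h => hnB ((indepDom_image_val_iff_of_universal hu (hne B hB)).mp h), ?_⟩
    rw [← Set.image_union]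
    exact (indepDom_image_val_iff_of_universal hu ((hne A hA).mono Set.subset_union_left)).mpr
      hABdom

end Extensions

section Isomorphisms

variable {α β γ δ : Type*} {G : SimpleGraph α} {H : SimpleGraph β}

@[simp]
lemma graphJoin_adj_inl_inl {a b : α} : (graphJoin G H).Adj (.inl a) (.inl b) ↔ G.Adj a b := by
  simp only [graphJoin, SimpleGraph.compl_adj, ne_eq, Sum.inl.injEq, SimpleGraph.sum_adj,
    not_and, not_not]
  exact ⟨fun h => h.2 h.1, fun h => ⟨h.ne, fun _ => h⟩⟩

@[simp]
lemma graphJoin_adj_inr_inr {a b : β} : (graphJoin G H).Adj (.inr a) (.inr b) ↔ H.Adj a b := by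
  simp only [graphJoin, SimpleGraph.compl_adj, ne_eq, Sum.inr.injEq, SimpleGraph.sum_adj,
    not_and, not_not]
  exact ⟨fun h => h.2 h.1, fun h => ⟨h.ne, fun _ => h⟩⟩

@[simp]
lemma graphJoin_adj_inl_inr {a : α} {b : β} : (graphJoin G H).Adj (.inl a) (.inr b) := by
  simp [graphJoin]

@[simp]
lemma graphJoin_adj_inr_inl {a : β} {b : α} : (graphJoin G H).Adj (.inr a) (.inl b) := by
  simp [graphJoin]

def graphJoinCongr {G' : SimpleGraph γ} {H' : SimpleGraph δ} (e : G ≃g G') (f : H ≃g H') :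
    graphJoin G H ≃g graphJoin G' H' where
  toEquiv := Equiv.sumCongr e.toEquiv f.toEquiv
  map_rel_iff' := by rintro (a | a) (b | b) <;> simp [SimpleGraph.Iso.map_adj_iff]

lemma nonempty_iso_sum_induce_compl (S : Set α) (h : ∀ x ∈ S, ∀ y ∉ S, ¬ G.Adj x y) :
    Nonempty (G ≃g G.induce S ⊕g G.induce Sᶜ) := by
  classical
  refine ⟨(RelIso.mk (Equiv.Set.sumCompl S) ?_).symm⟩
  rintro (⟨a, ha⟩ | ⟨a, ha⟩) (⟨b, hb⟩ | ⟨b, hb⟩)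
  · simp
  · simpa using h a ha b hb
  · simpa using fun hab => h b hb a ha hab.symm
  · simp

lemma nonempty_iso_graphJoin_induce_compl (S : Set α) (h : ∀ x ∈ S, ∀ y ∉ S, G.Adj x y) :
    Nonempty (G ≃g graphJoin (G.induce S) (G.induce Sᶜ)) := by
  classical
  refine ⟨(RelIso.mk (Equiv.Set.sumCompl S) ?_).symm⟩
  rintro (⟨a, ha⟩ | ⟨a, ha⟩) (⟨b, hb⟩ | ⟨b, hb⟩)
  · simp
  · simpa using h a ha b hb
  · simpa using (h b hb a ha).symm
  · simp

variable [Finite α]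

lemma nonempty_iso_induce_top {S : Set α} (hS : ∀ x ∈ S, ∀ y ∈ S, x ≠ y → G.Adj x y) {n : ℕ}
    (hn : S.ncard = n) : Nonempty (G.induce S ≃g (⊤ : SimpleGraph (Fin n))) := by
  let e : S ≃ Fin n := (Finite.equivFin S).trans (finCongr (by rw [Nat.card_coe_set_eq, hn]))
  refine ⟨⟨e, fun {a b} => ?_⟩⟩
  simp only [SimpleGraph.top_adj, ne_eq, EmbeddingLike.apply_eq_iff_eq, SimpleGraph.comap_adj,
    Function.Embedding.coe_subtype]
  exact ⟨fun hab => hS a a.2 b b.2 (Subtype.coe_ne_coe.mpr hab), fun hab h => hab.ne (h ▸ rfl)⟩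

lemma nonempty_iso_induce_bot {S : Set α} (hS : IndepSet G S) {n : ℕ} (hn : S.ncard = n) :
    Nonempty (G.induce S ≃g (⊥ : SimpleGraph (Fin n))) := by
  let e : S ≃ Fin n := (Finite.equivFin S).trans (finCongr (by rw [Nat.card_coe_set_eq, hn]))
  refine ⟨⟨e, fun {a b} => ?_⟩⟩
  simpa using hS a.2 b.2

lemma exists_iso_fin (G : SimpleGraph α) :
    ∃ H : SimpleGraph (Fin (Nat.card α)), Nonempty (G ≃g H) :=
  ⟨_, ⟨SimpleGraph.Iso.map (Finite.equivFin α) G⟩⟩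

end Isomorphisms

section IdomaticPartitions

variable {G : SimpleGraph V} {ρ : Finset (Finset V)}

lemma IsPartition.colorable (hρ : IsPartition ρ) (hind : ∀ A ∈ ρ, IndepSet G A) :
    G.Colorable ρ.card := by
  choose cls hcls hmem using hρ.exists_mem
  refine ⟨SimpleGraph.Coloring.mk (fun v => ρ.equivFin ⟨cls v, hcls v⟩) fun {v w} hvw heq => ?_⟩
  have hvw' : cls v = cls w := congrArg Subtype.val (ρ.equivFin.injective heq)
  exact hind (cls v) (hcls v) (hmem v) (hvw' ▸ hmem w) hvw

lemma IsIdomaticPartition.exists_adj (hρ : IsIdomaticPartition G ρ) (h2 : 2 ≤ ρ.card) (v : V) :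
    ∃ w, G.Adj v w := by
  obtain ⟨A, hA, hvA⟩ := hρ.1.exists_mem v
  obtain ⟨B, hB, hBA⟩ := Finset.exists_mem_ne (by omega : 1 < ρ.card) A
  obtain hvB | ⟨w, -, hwv⟩ := (hρ.2 B hB).2 v
  · exact absurd (hρ.1.eq_of_mem hB hA hvB hvA) hBA
  · exact ⟨w, hwv.symm⟩

lemma IsIdomaticPartition.map {W : Type*} [DecidableEq W] {H : SimpleGraph W} (e : G ≃g H)
    (hρ : IsIdomaticPartition G ρ) :
    IsIdomaticPartition H (ρ.image (Finset.map e.toEquiv.toEmbedding)) := by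
  have hmem : ∀ {A : Finset V} {w : W}, w ∈ A.map e.toEquiv.toEmbedding ↔ e.symm w ∈ A := by
    intro A w
    rw [Finset.mem_map_equiv]
    rfl
  refine ⟨isPartition_iff.mpr ⟨?_, ?_, fun w => ?_⟩, ?_⟩ <;> simp only [Finset.mem_image]
  · rintro _ ⟨A, hA, rfl⟩
    exact ((isPartition_iff.mp hρ.1).1 A hA).map
  · rintro _ ⟨A, hA, rfl⟩ _ ⟨B, hB, rfl⟩ w hwA hwB
    rw [hρ.1.eq_of_mem hA hB (hmem.mp hwA) (hmem.mp hwB)]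
  · obtain ⟨A, hA, hwA⟩ := hρ.1.exists_mem (e.symm w)
    exact ⟨_, ⟨A, hA, rfl⟩, hmem.mpr hwA⟩
  · rintro _ ⟨A, hA, rfl⟩
    refine ⟨fun x hx y hy hxy => (hρ.2 A hA).1 (hmem.mp hx) (hmem.mp hy) ?_, fun w => ?_⟩
    · simpa using e.symm.map_adj_iff.mpr hxy
    · obtain hwA | ⟨x, hxA, hxw⟩ := (hρ.2 A hA).2 (e.symm w)
      · exact Or.inl (hmem.mpr hwA)
      · refine Or.inr ⟨e x, hmem.mpr (by simpa using hxA), ?_⟩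
        simpa using e.map_adj_iff.mpr hxw

lemma idNum_le_of_iso [Finite V] {W : Type*} [Finite W] {H : SimpleGraph W} (e : G ≃g H) :
    idNum G ≤ idNum H := by
  classical
  refine idNum_le fun ρ hρ => ?_
  rw [← Finset.card_image_of_injective ρ (Finset.map_injective e.toEquiv.toEmbedding)]
  exact card_le_idNum (hρ.map e)

lemma idNum_congr [Finite V] {W : Type*} [Finite W] {H : SimpleGraph W} (e : G ≃g H) :
    idNum G = idNum H :=
  (idNum_le_of_iso e).antisymm (idNum_le_of_iso e.symm)

end IdomaticPartitions

section Combinatorics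

variable {α : Type*} [DecidableEq α] {R : α → α → Prop}

lemma card_erase_erase {Q : Finset α} {x y : α} (hx : x ∈ Q) (hy : y ∈ Q) (hyx : y ≠ x) :
    ((Q.erase x).erase y).card = Q.card - 2 := by
  rw [Finset.card_erase_of_mem (Finset.mem_erase.mpr ⟨hyx, hy⟩), Finset.card_erase_of_mem hx]
  omega

lemma exists_center_of_card_eq_three (hR : ∀ x y, R x y → R y x) {Q : Finset α}
    (hQ : Q.card = 3) (h : ∀ x ∈ Q, ∃ y ∈ Q, y ≠ x ∧ R x y) :
    ∃ t ∈ Q, ∀ x ∈ Q, x ≠ t → R t x := by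
  obtain ⟨x, hx⟩ := Finset.card_pos.mp (by omega : 0 < Q.card)
  obtain ⟨y, hy, hyx, hxy⟩ := h x hx
  obtain ⟨z, hxyz⟩ := Finset.card_eq_one.mp ((card_erase_erase hx hy hyx).trans (by omega))
  have hz : z ∈ (Q.erase x).erase y := hxyz ▸ Finset.mem_singleton_self z
  simp only [Finset.mem_erase] at hz
  have hmem : ∀ v ∈ Q, v = x ∨ v = y ∨ v = z := by
    intro v hv
    by_contra! hne
    have : v ∈ (Q.erase x).erase y := by simp [hne.1, hne.2.1, hv]
    exact hne.2.2 (by simpa [hxyz] using this)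
  obtain ⟨p, hp, hpz, hzp⟩ := h z hz.2.2
  rcases hmem p hp with rfl | rfl | rfl
  · refine ⟨_, hx, fun v hv hvp => ?_⟩
    rcases hmem v hv with rfl | rfl | rfl
    exacts [absurd rfl hvp, hxy, hR _ _ hzp]
  · refine ⟨_, hy, fun v hv hvp => ?_⟩
    rcases hmem v hv with rfl | rfl | rfl
    exacts [hR _ _ hxy, absurd rfl hvp, hR _ _ hzp]
  · exact absurd rfl hpz

lemma exists_center_or_matching (hR : ∀ x y, R x y → R y x) {Q : Finset α} (hQ : Q.card = 4)
    (h : ∀ x ∈ Q, ∃ y ∈ Q, y ≠ x ∧ R x y) :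
    (∃ t ∈ Q, ∀ x ∈ Q, x ≠ t → R t x) ∨
      ∃ a ∈ Q, ∃ b ∈ Q, ∃ c ∈ Q, ∃ d ∈ Q, (∀ x ∈ Q, x = a ∨ x = b ∨ x = c ∨ x = d) ∧
        a ≠ c ∧ a ≠ d ∧ b ≠ c ∧ b ≠ d ∧ R a b ∧ R c d := by
  obtain ⟨x, hx⟩ := Finset.card_pos.mp (by omega : 0 < Q.card)
  obtain ⟨y, hy, hyx, hxy⟩ := h x hx
  obtain ⟨z, w, hzw, hxyzw⟩ := Finset.card_eq_two.mp ((card_erase_erase hx hy hyx).trans (by omega))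
  have hz : z ∈ (Q.erase x).erase y := hxyzw ▸ by simp
  have hw : w ∈ (Q.erase x).erase y := hxyzw ▸ by simp
  simp only [Finset.mem_erase] at hz hw
  have hmem : ∀ v ∈ Q, v = x ∨ v = y ∨ v = z ∨ v = w := by
    intro v hv
    by_contra! hne
    have : v ∈ (Q.erase x).erase y := by simp [hne.1, hne.2.1, hv]
    simp [hxyzw, hne.2.2.1, hne.2.2.2] at this
  by_cases hRzw : R z w
  · exact Or.inr ⟨x, hx, y, hy, z, hz.2.2, w, hw.2.2, hmem, hz.2.1.symm, hw.2.1.symm, hz.1.symm,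
      hw.1.symm, hxy, hRzw⟩
  obtain ⟨p, hp, hpz, hzp⟩ := h z hz.2.2
  obtain ⟨q, hq, hqw, hwq⟩ := h w hw.2.2
  have hp' : p = x ∨ p = y := by
    rcases hmem p hp with rfl | rfl | rfl | rfl
    exacts [Or.inl rfl, Or.inr rfl, absurd rfl hpz, absurd hzp hRzw]
  have hq' : q = x ∨ q = y := by
    rcases hmem q hq with rfl | rfl | rfl | rfl
    exacts [Or.inl rfl, Or.inr rfl, absurd (hR _ _ hwq) hRzw, absurd rfl hqw]
  rcases hp' with rfl | rfl <;> rcases hq' with rfl | rfl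
  · refine Or.inl ⟨_, hx, fun v hv hvp => ?_⟩
    rcases hmem v hv with rfl | rfl | rfl | rfl
    exacts [absurd rfl hvp, hxy, hR _ _ hzp, hR _ _ hwq]
  · refine Or.inr ⟨_, hx, z, hz.2.2, _, hy, w, hw.2.2, fun v hv => ?_, hyx.symm, hw.2.1.symm,
      hz.1, hzw, hR _ _ hzp, hR _ _ hwq⟩
    rcases hmem v hv with h | h | h | h <;> simp [h]
  · refine Or.inr ⟨_, hx, w, hw.2.2, _, hy, z, hz.2.2, fun v hv => ?_, hyx.symm, hz.2.1.symm,
      hw.1, hzw.symm, hR _ _ hwq, hR _ _ hzp⟩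
    rcases hmem v hv with h | h | h | h <;> simp [h]
  · refine Or.inl ⟨_, hy, fun v hv hvp => ?_⟩
    rcases hmem v hv with rfl | rfl | rfl | rfl
    exacts [hR _ _ hxy, absurd rfl hvp, hR _ _ hzp, hR _ _ hwq]

end Combinatorics

section Structure

variable {G : SimpleGraph V} {π : Finset (Finset V)}

lemma isolated_of_forall_indepDom_union (hπ : IsPartition π) (h2 : 1 < π.card) {T : Finset V}
    (hstar : ∀ X ∈ π, X ≠ T → IndepDom G (↑X ∪ ↑T)) :
    ∀ t ∈ T, ∀ v, ¬ G.Adj t v := by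
  obtain ⟨X₀, hX₀, hX₀T⟩ := Finset.exists_mem_ne h2 T
  intro t ht v htv
  obtain ⟨X, hX, hvX⟩ := hπ.exists_mem v
  by_cases hXT : X = T
  · exact (hstar X₀ hX₀ hX₀T).1 (Or.inr ht) (Or.inr (hXT ▸ hvX)) htv
  · exact (hstar X hX hXT).1 (Or.inr ht) (Or.inl hvX) htv

lemma isIdomaticPartition_restrictCompl (hπ : IsPartition π) {T : Finset V} (hT : T ∈ π)
    (hiso : ∀ t ∈ T, ∀ v, ¬ G.Adj t v) (hstar : ∀ X ∈ π, X ≠ T → IndepDom G (↑X ∪ ↑T)) :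
    IsIdomaticPartition (G.induce (T : Set V)ᶜ) (restrictCompl π T) := by
  refine ⟨isPartition_restrictCompl hπ hT, fun X' hX' => ?_⟩
  obtain ⟨X, hX, hXT, rfl⟩ := mem_restrictCompl.mp hX'
  obtain ⟨hind, hdom⟩ := hstar X hX hXT
  rw [IndepDom, indepSet_induce_iff, dominating_induce_iff,
    image_val_traceOn (hπ.subset_compl hT hX hXT)]
  refine ⟨hind.mono Set.subset_union_left, fun v hv => ?_⟩
  obtain (h | h) | ⟨u, hu | hu, huv⟩ := hdom v
  exacts [Or.inl h, absurd h hv, Or.inr ⟨u, hu, huv⟩, absurd huv (hiso u hu v)]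

lemma forall_indepDom_union_restrictCompl (hπ : IsPartition π) {Y T : Finset V} (hY : Y ∈ π)
    (hT : T ∈ π) (hTY : T ≠ Y) (hstar : ∀ X ∈ π, X ≠ Y → X ≠ T → IndepDom G (↑X ∪ ↑T)) :
    ∀ X' ∈ restrictCompl π Y, X' ≠ traceOn (Y : Set V)ᶜ T →
      IndepDom (G.induce (Y : Set V)ᶜ) (↑X' ∪ ↑(traceOn (Y : Set V)ᶜ T)) := by
  intro X' hX' hX'T
  obtain ⟨X, hX, hXY, rfl⟩ := mem_restrictCompl.mp hX'
  rw [coe_traceOn, coe_traceOn, ← Set.preimage_union]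
  exact (hstar X hX hXY fun h => hX'T (h ▸ rfl)).induce
    (Set.union_subset (hπ.subset_compl hY hX hXY) (hπ.subset_compl hY hT hTY))

variable [Finite V]

lemma exists_iso_sum_bot_of_star (hπ : IsPartition π) (h3 : 3 ≤ π.card) (hIC : IC G ≤ π.card)
    {T : Finset V} (hT : T ∈ π) (hstar : ∀ X ∈ π, X ≠ T → IndepDom G (↑X ∪ ↑T)) :
    ∃ (W : Type) (H : SimpleGraph W) (m : ℕ), 1 ≤ m ∧ H.Colorable (π.card - 1) ∧
      (∀ v : W, ∃ w : W, H.Adj v w) ∧ idNum H = π.card - 1 ∧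
      Nonempty (G ≃g (H ⊕g (⊥ : SimpleGraph (Fin m)))) := by
  classical
  have hTne : T.Nonempty := (isPartition_iff.mp hπ).1 T hT
  have hiso := isolated_of_forall_indepDom_union hπ (by omega) hstar
  have hρ := isIdomaticPartition_restrictCompl hπ hT hiso hstar
  have hcard : (restrictCompl π T).card = π.card - 1 := hπ.card_restrictCompl hT
  have hid : idNum (G.induce (T : Set V)ᶜ) = π.card - 1 := by
    refine idNum_eq hρ hcard fun ρ hρ' => ?_
    obtain ⟨X', hX'⟩ := Finset.card_pos.mp (by omega : 0 < (restrictCompl π T).card)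
    obtain ⟨x, -⟩ := (isPartition_iff.mp hρ.1).1 X' hX'
    obtain ⟨A, hA, -⟩ := hρ'.1.exists_mem x
    have := card_add_one_le_IC_of_isolated hTne hiso hρ' ⟨A, hA⟩
    omega
  obtain ⟨H, ⟨e⟩⟩ := exists_iso_fin (G.induce (T : Set V)ᶜ)
  obtain ⟨eG⟩ := nonempty_iso_sum_induce_compl (G := G) (T : Set V)ᶜ
    fun x _ y hy hxy => hiso y (not_not.mp hy) x hxy.symm
  obtain ⟨eT⟩ := nonempty_iso_induce_bot (G := G) (S := (T : Set V)ᶜᶜ)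
    (by rw [compl_compl]; exact fun t ht v _ => hiso t ht v) rfl
  refine ⟨_, H, _, ?_, ?_, fun v => ?_, (idNum_congr e).symm.trans hid,
    ⟨eG.trans (SimpleGraph.Iso.sumCongr e eT)⟩⟩
  · rw [compl_compl, Set.ncard_coe_finset]
    exact hTne.card_pos
  · exact SimpleGraph.Colorable.of_hom e.symm.toHom
      (hcard ▸ hρ.1.colorable fun A hA => (hρ.2 A hA).1)
  · obtain ⟨w, hw⟩ := hρ.exists_adj (by omega) (e.symm v)
    exact ⟨e w, e.apply_symm_apply v ▸ e.map_adj_iff.mpr hw⟩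

lemma inB1_of_indepDom (hIC : IC G ≤ 4) (hnu : ∀ v : V, ¬ Dominating G {v}) {H₁ H₂ : Set V}
    (hcov : H₁ ∪ H₂ = Set.univ) (hdisj : Disjoint H₁ H₂) (h₁ : IndepDom G H₁)
    (h₂ : IndepDom G H₂) (hne₁ : H₁.Nonempty) (hne₂ : H₂.Nonempty) : InB1 G := by
  classical
  have := Fintype.ofFinite V
  have hne : H₁.toFinset ≠ H₂.toFinset := by
    intro h
    obtain ⟨v, hv⟩ := hne₁
    exact Set.disjoint_left.mp hdisj hv (Set.mem_toFinset.mp (h ▸ Set.mem_toFinset.mpr hv))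
  have hρ : IsIdomaticPartition G {H₁.toFinset, H₂.toFinset} := by
    refine ⟨isPartition_iff.mpr ⟨?_, ?_, fun v => ?_⟩, ?_⟩ <;>
      simp only [Finset.mem_insert, Finset.mem_singleton, forall_eq_or_imp, forall_eq,
        Set.mem_toFinset, Set.coe_toFinset, exists_eq_or_imp]
    · exact ⟨Set.toFinset_nonempty.mpr hne₁, Set.toFinset_nonempty.mpr hne₂⟩
    · refine ⟨⟨fun _ _ _ => trivial, fun v h₁ h₂ => ?_⟩, fun v h₂ h₁ => ?_, fun _ _ _ => trivial⟩
      · exact absurd h₂ (Set.disjoint_left.mp hdisj h₁)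
      · exact absurd h₂ (Set.disjoint_left.mp hdisj h₁)
    · simpa using (Set.ext_iff.mp hcov v).mpr trivial
    · exact ⟨h₁, h₂⟩
  have hcard : ({H₁.toFinset, H₂.toFinset} : Finset (Finset V)).card = 2 := Finset.card_pair hne
  refine ⟨H₁, H₂, hcov, hdisj, h₁.1, h₂.1, two_le_ncard_of_dominating hnu h₁.2 hne₁,
    two_le_ncard_of_dominating hnu h₂.2 hne₂, hρ.exists_adj hcard.ge,
    idNum_eq hρ hcard fun ρ hρ' => ?_⟩
  have := two_mul_card_le_IC hnu hρ'
  omega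

end Structure

section Cases

variable [Finite V] {G : SimpleGraph V} {π : Finset (Finset V)}

lemma IsICPartition.nonempty_iso_top (hπ : IsICPartition G π) (hcard : π.card = 4)
    (hQ : (coalitionClasses G π).card = 0) : Nonempty (G ≃g (⊤ : SimpleGraph (Fin 4))) := by
  have huniv : ∀ v : V, Dominating G {v} := fun v => by
    by_contra hv
    obtain ⟨A, hA, -⟩ := hπ.not_dominating_iff.mp hv
    exact Finset.card_ne_zero_of_mem hA hQ
  have hR : {v : V | Dominating G {v}} = Set.univ := Set.eq_univ_of_forall huniv
  have hn : (Set.univ : Set V).ncard = 4 := by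
    have hsum := hπ.ncard_add_card_coalitionClasses
    rwa [hR, hQ, hcard] at hsum
  obtain ⟨e⟩ := nonempty_iso_induce_top (G := G)
    (fun x _ y _ hxy => dominating_singleton_iff.mp (huniv x) y hxy.symm) hn
  exact ⟨(SimpleGraph.induceUnivIso G).symm.trans e⟩

lemma IsICPartition.exists_iso_graphJoin_top_bot (hπ : IsICPartition G π)
    (hR : {v : V | Dominating G {v}}.ncard = 2) (hQ : (coalitionClasses G π).card = 2) :
    ∃ m : ℕ, 2 ≤ m ∧
      Nonempty (G ≃g graphJoin (⊤ : SimpleGraph (Fin 2)) (⊥ : SimpleGraph (Fin m))) := by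
  classical
  obtain ⟨X, Y, hXY, hQXY⟩ := Finset.card_eq_two.mp hQ
  have hX : X ∈ coalitionClasses G π := by simp [hQXY]
  obtain ⟨B, hB, hBX, hcoal⟩ := hπ.exists_coalition hX
  have hBY : B = Y := by simpa [hQXY, hBX] using hB
  subst hBY
  set R := {v : V | Dominating G {v}}
  have hRc : Rᶜ = ↑X ∪ ↑B := by
    ext v
    rw [Set.mem_compl_iff, Set.mem_ofPred_eq, hπ.not_dominating_iff, hQXY]
    simp
  obtain ⟨eJ⟩ := nonempty_iso_graphJoin_induce_compl R
    fun x hx y hy => dominating_singleton_iff.mp hx y fun h => hy (h ▸ hx)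
  obtain ⟨eK⟩ := nonempty_iso_induce_top
    (fun x hx y _ hxy => dominating_singleton_iff.mp hx y hxy.symm) hR
  obtain ⟨eE⟩ := nonempty_iso_induce_bot (S := Rᶜ) (hRc ▸ hcoal.2.2.2.2.2.1) rfl
  refine ⟨_, ?_, ⟨eJ.trans (graphJoinCongr eK eE)⟩⟩
  have hXne := (isPartition_iff.mp hπ.1).1 X (mem_coalitionClasses.mp hX).1
  have hBne := (isPartition_iff.mp hπ.1).1 B (mem_coalitionClasses.mp hB).1
  rw [hRc, Set.ncard_union_eq hcoal.1, Set.ncard_coe_finset, Set.ncard_coe_finset]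
  have := hXne.card_pos
  have := hBne.card_pos
  omega

lemma IsICPartition.exists_iso_graphJoin_inB2 (hπ : IsICPartition G π) (hIC : IC G = 4)
    (hcard : π.card = 4) (hR : {v : V | Dominating G {v}}.ncard = 1)
    (hQ : (coalitionClasses G π).card = 3) :
    ∃ (W : Type) (B : SimpleGraph W), InB2 B ∧
      Nonempty (G ≃g graphJoin (⊤ : SimpleGraph (Fin 1)) B) := by
  classical
  obtain ⟨u, hRu⟩ := Set.ncard_eq_one.mp hR
  have hdom_iff : ∀ v, Dominating G {v} ↔ v = u := fun v => Set.ext_iff.mp hRu v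
  have hu : Dominating G {u} := (hdom_iff u).mpr rfl
  have hu_mem : {u} ∈ π := hπ.singleton_mem hu
  have hcoal_iff X (hX : X ∈ π) := hπ.mem_coalitionClasses_iff_ne_singleton hdom_iff hX
  obtain ⟨T, hTQ, hT⟩ := exists_center_of_card_eq_three (fun _ _ h => h.symm) hQ
    fun X hX => hπ.exists_coalition hX
  have hTπ := (mem_coalitionClasses.mp hTQ).1
  have hTu : T ≠ {u} := (hcoal_iff T hTπ).mp hTQ
  have hcard' := hπ.1.card_restrictCompl hu_mem
  have hIC' : IC (G.induce (({u} : Finset V) : Set V)ᶜ) ≤ (restrictCompl π {u}).card := by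
    refine IC_le fun π' hπ' => ?_
    have := card_add_one_le_IC_of_universal hu hπ'
    omega
  obtain ⟨W, H, m, hm, hcol, hdeg, hid, ⟨e⟩⟩ := exists_iso_sum_bot_of_star
    (isPartition_restrictCompl hπ.1 hu_mem) (by omega) hIC' (T := traceOn _ T)
    (mem_restrictCompl.mpr ⟨T, hTπ, hTu, rfl⟩)
    (forall_indepDom_union_restrictCompl hπ.1 hu_mem hTπ hTu fun X hX hXu hXT =>
      Set.union_comm (X : Set V) T ▸ (hT X ((hcoal_iff X hX).mpr hXu) hXT).2.2.2.2.2)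
  rw [hcard', hcard] at hcol hid
  obtain ⟨eJ⟩ := nonempty_iso_graphJoin_induce_compl (G := G) (({u} : Finset V) : Set V)
    fun x hx y hy => by
      rw [Finset.coe_singleton, Set.mem_singleton_iff] at hx
      exact hx ▸ dominating_singleton_iff.mp hu y (by simpa using hy)
  obtain ⟨eK⟩ := nonempty_iso_induce_top (G := G) (S := (({u} : Finset V) : Set V)) (n := 1)
    (fun x hx y hy hxy => by simp_all) (by simp)
  exact ⟨_, H ⊕g (⊥ : SimpleGraph (Fin m)), ⟨W, H, m, hm, hcol, hdeg, hid, ⟨.refl⟩⟩,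
    ⟨eJ.trans (graphJoinCongr eK e)⟩⟩

lemma IsICPartition.inB1_or_inB3 (hπ : IsICPartition G π) (hIC : IC G = 4) (hcard : π.card = 4)
    (hR : {v : V | Dominating G {v}}.ncard = 0) (hQ : (coalitionClasses G π).card = 4) :
    InB1 G ∨ InB3 G := by
  classical
  have hnu : ∀ v : V, ¬ Dominating G {v} := fun v hv =>
    (Set.eq_empty_iff_forall_notMem.mp ((Set.ncard_eq_zero (Set.toFinite _)).mp hR)) v hv
  have hQπ : ∀ X ∈ π, X ∈ coalitionClasses G π := fun X hX =>
    mem_coalitionClasses.mpr ⟨hX, fun ⟨v, hv, hdom⟩ => hnu v (hv ▸ hdom)⟩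
  have mem : ∀ X ∈ coalitionClasses G π, X ∈ π := fun X hX => (mem_coalitionClasses.mp hX).1
  obtain ⟨T, hTQ, hT⟩ | ⟨a, ha, b, hb, c, hc, d, hd, hcov, hac, had, hbc, hbd, hab, hcd⟩ :=
    exists_center_or_matching (fun _ _ h => h.symm) hQ fun X hX => hπ.exists_coalition hX
  · right
    have := exists_iso_sum_bot_of_star hπ.1 (by omega) (by omega) (mem T hTQ)
      fun X hX hXT => Set.union_comm (X : Set V) T ▸ (hT X (hQπ X hX) hXT).2.2.2.2.2
    rwa [hcard] at this
  · left
    refine inB1_of_indepDom hIC.le hnu (Set.eq_univ_of_forall fun v => ?_) ?_ hab.2.2.2.2.2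
      hcd.2.2.2.2.2 ?_ ?_
    · obtain ⟨X, hX, hvX⟩ := hπ.1.exists_mem v
      rcases hcov X (hQπ X hX) with rfl | rfl | rfl | rfl <;> simp [hvX]
    · exact Set.disjoint_union_left.mpr
        ⟨Set.disjoint_union_right.mpr ⟨hπ.1.disjoint (mem a ha) (mem c hc) hac,
          hπ.1.disjoint (mem a ha) (mem d hd) had⟩,
        Set.disjoint_union_right.mpr ⟨hπ.1.disjoint (mem b hb) (mem c hc) hbc,
          hπ.1.disjoint (mem b hb) (mem d hd) hbd⟩⟩
    · exact (Finset.coe_nonempty.mpr ((isPartition_iff.mp hπ.1).1 a (mem a ha))).mono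
        Set.subset_union_left
    · exact (Finset.coe_nonempty.mpr ((isPartition_iff.mp hπ.1).1 c (mem c hc))).mono
        Set.subset_union_left

end Cases

theorem stmt_15 {V : Type*} [Fintype V] (G : SimpleGraph V) (h : IC G = 4) :
    Nonempty (G ≃g (⊤ : SimpleGraph (Fin 4))) ∨
    (∃ m : ℕ, 2 ≤ m ∧
      Nonempty (G ≃g graphJoin (⊤ : SimpleGraph (Fin 2)) (⊥ : SimpleGraph (Fin m)))) ∨
    (∃ (W : Type) (B : SimpleGraph W), InB2 B ∧
      Nonempty (G ≃g graphJoin (⊤ : SimpleGraph (Fin 1)) B)) ∨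
    InB1 G ∨ InB3 G := by
  obtain ⟨π, hπ, hcard⟩ := exists_isICPartition_card_eq_IC (G := G) (by omega)
  rw [h] at hcard
  have hsum := hπ.ncard_add_card_coalitionClasses
  have hQ₁ := hπ.card_coalitionClasses_ne_one
  obtain hQ | hQ | hQ | hQ : (coalitionClasses G π).card = 0 ∨ (coalitionClasses G π).card = 2 ∨
      (coalitionClasses G π).card = 3 ∨ (coalitionClasses G π).card = 4 := by omega
  · exact Or.inl (hπ.nonempty_iso_top hcard hQ)
  · exact Or.inr (Or.inl (hπ.exists_iso_graphJoin_top_bot (by omega) hQ))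
  · exact Or.inr (Or.inr (Or.inl (hπ.exists_iso_graphJoin_inB2 h hcard (by omega) hQ)))
  · exact Or.inr (Or.inr (Or.inr (hπ.inB1_or_inB3 h hcard (by omega) hQ)))

end ICNL
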